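/- arXiv:1410.2880 — 2 statements merged into one kernel-verified Lean document; each statement's English description precedes it below -/
import Mathlib

section
/- Fix 0 < u₁ < u₀, let ρ be a cutoff function, and let μ be a Borel measure on ℝ (possibly of infinite total mass) such that ∫_ℝ min(1, u²) μ(du) < ∞, and such that the restriction of μ to [−u₀, u₀] has a density σ (with respect to Lebesgue measure) that is positive and continuously differentiable on [−u₀, u₀] \ {0} and satisfies |σ'(u)| ≤ C₀ |u|⁻¹ σ(u) for all 0 < |u| ≤ u₀. Define χ(u) = −(σ(u)ρ(u))'/σ(u) for 0 < |u| ≤ u₀ and χ(u) = 0 for |u| > u₀. Then χ is square-integrable with respect to μ: ∫_ℝ χ(u)² μ(du) < ∞. -/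
/-!
Near `0` the cutoff is `ρ u = u²`, so the bound `|σ'| ≤ C₀ |u|⁻¹ σ` on the logarithmic derivative
of the density gives `|χ u| ≤ C₀ |u|⁻¹ |ρ u| + |ρ' u| = (C₀ + 2) |u|`. Away from `0`, `χ` is
bounded, and it vanishes outside `[-u₀, u₀]`. Hence `χ² ≤ C · min(1, u²)` off the null set `{0}`,
which is `μ`-integrable because `μ` is a Lévy measure.
-/

open MeasureTheory

lemma abs_deriv_mul_div_le {σ ρ : ℝ → ℝ} {u c : ℝ} (hσ : DifferentiableAt ℝ σ u)
    (hρ : DifferentiableAt ℝ ρ u) (hσpos : 0 < σ u) (hσbd : |deriv σ u| ≤ c * σ u) :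
    |deriv (fun v => σ v * ρ v) u / σ u| ≤ c * |ρ u| + |deriv ρ u| := by
  rw [deriv_fun_mul hσ hρ, abs_div, abs_of_pos hσpos, div_le_iff₀ hσpos]
  calc |deriv σ u * ρ u + σ u * deriv ρ u|
      ≤ |deriv σ u| * |ρ u| + σ u * |deriv ρ u| := by
        simpa only [abs_mul, abs_of_pos hσpos] using
          abs_add_le (deriv σ u * ρ u) (σ u * deriv ρ u)
    _ ≤ c * σ u * |ρ u| + σ u * |deriv ρ u| := by gcongr
    _ = (c * |ρ u| + |deriv ρ u|) * σ u := by ring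

lemma deriv_eq_two_mul_of_eq_sq {ρ : ℝ → ℝ} {r u : ℝ} (hρ : ∀ v, |v| ≤ r → ρ v = v ^ 2)
    (hu : |u| < r) : deriv ρ u = 2 * u := by
  have hρu : ρ =ᶠ[nhds u] fun v => v ^ 2 := by
    filter_upwards [(isOpen_lt continuous_abs continuous_const).mem_nhds hu] with v hv
    exact hρ v hv.le
  simp [hρu.deriv_eq]

lemma abs_deriv_mul_div_le_of_eq_sq {σ ρ : ℝ → ℝ} {r u c : ℝ}
    (hρ : ∀ v, |v| ≤ r → ρ v = v ^ 2) (hu : 0 < |u|) (hur : |u| < r)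
    (hσ : DifferentiableAt ℝ σ u) (hρd : DifferentiableAt ℝ ρ u) (hσpos : 0 < σ u)
    (hσbd : |deriv σ u| ≤ c * |u|⁻¹ * σ u) :
    |deriv (fun v => σ v * ρ v) u / σ u| ≤ (c + 2) * |u| :=
  calc |deriv (fun v => σ v * ρ v) u / σ u| ≤ c * |u|⁻¹ * |u ^ 2| + |2 * u| := by
        simpa only [hρ u hur.le, deriv_eq_two_mul_of_eq_sq hρ hur] using
          abs_deriv_mul_div_le hσ hρd hσpos hσbd
    _ = (c + 2) * |u| := by
        rw [abs_pow, abs_mul, abs_two]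
        field_simp

lemma exists_abs_le_mul_min_one_abs {f : ℝ → ℝ} {t R a K : ℝ} (ht : 0 < t) (ht1 : t ≤ 1)
    (hsmall : ∀ u, 0 < |u| → |u| < t → |f u| ≤ a * |u|)
    (hmid : ∀ u, t ≤ |u| → |u| ≤ R → |f u| ≤ K) (hout : ∀ u, R < |u| → f u = 0) :
    ∃ C, ∀ u, u ≠ 0 → |f u| ≤ C * min 1 |u| := by
  refine ⟨max a (|K| / t), fun u hu => ?_⟩
  rcases lt_or_ge |u| t with hut | htu
  · rw [min_eq_right (hut.trans_le ht1).le]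
    exact (hsmall u (abs_pos.mpr hu) hut).trans
      (mul_le_mul_of_nonneg_right (le_max_left _ _) (abs_nonneg u))
  have hmin : t ≤ min 1 |u| := le_min ht1 htu
  rcases le_or_gt |u| R with huR | hRu
  · calc |f u| ≤ |K| / t * t := by
          rw [div_mul_cancel₀ _ ht.ne']
          exact (hmid u htu huR).trans (le_abs_self K)
      _ ≤ max a (|K| / t) * min 1 |u| := by gcongr; exact le_max_right _ _
  · rw [hout u hRu, abs_zero]
    exact mul_nonneg ((by positivity : 0 ≤ |K| / t).trans (le_max_right _ _)) (ht.le.trans hmin)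

lemma lintegral_ofReal_sq_lt_top_of_abs_le_mul_min_one_abs {μ : Measure ℝ} (hμ0 : μ {0} = 0)
    (hμ : ∫⁻ u, ENNReal.ofReal (min 1 (u ^ 2)) ∂μ < ⊤) {f : ℝ → ℝ} {C : ℝ}
    (hf : ∀ u, u ≠ 0 → |f u| ≤ C * min 1 |u|) :
    ∫⁻ u, ENNReal.ofReal (f u ^ 2) ∂μ < ⊤ := by
  have hmin_sq : ∀ u : ℝ, min 1 |u| ^ 2 = min 1 (u ^ 2) := fun u => by
    rw [← sq_abs u]
    rcases le_total |u| 1 with h | h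
    · rw [min_eq_right h, min_eq_right (pow_le_one₀ (abs_nonneg u) h)]
    · rw [min_eq_left h, min_eq_left (one_le_pow₀ h), one_pow]
  have hf_sq : ∀ u, u ≠ 0 → f u ^ 2 ≤ C ^ 2 * min 1 (u ^ 2) := fun u hu => by
    rw [← hmin_sq, ← mul_pow, ← sq_abs (f u)]
    exact pow_le_pow_left₀ (abs_nonneg _) (hf u hu) 2
  have hae : ∀ᵐ u ∂μ, u ≠ 0 := measure_eq_zero_iff_ae_notMem.mp hμ0
  calc ∫⁻ u, ENNReal.ofReal (f u ^ 2) ∂μ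
      ≤ ∫⁻ u, ENNReal.ofReal (C ^ 2) * ENNReal.ofReal (min 1 (u ^ 2)) ∂μ := by
        refine lintegral_mono_ae (hae.mono fun u hu => ?_)
        rw [← ENNReal.ofReal_mul (sq_nonneg C)]
        exact ENNReal.ofReal_le_ofReal (hf_sq u hu)
    _ = ENNReal.ofReal (C ^ 2) * ∫⁻ u, ENNReal.ofReal (min 1 (u ^ 2)) ∂μ :=
        lintegral_const_mul' _ _ ENNReal.ofReal_ne_top
    _ < ⊤ := ENNReal.mul_lt_top ENNReal.ofReal_lt_top hμ

theorem stmt_9_general (u₁ u₀ C₀ : ℝ) (h1 : 0 < u₁) (h2 : u₁ < u₀) (hC₀ : 0 < C₀)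
    (ρ : ℝ → ℝ) (hρ : ContDiff ℝ 2 ρ)
    (hρbd : ∃ M : ℝ, ∀ u : ℝ, |deriv ρ u| ≤ M)
    (hρ1 : ∀ u : ℝ, |u| ≤ u₁ → ρ u = u ^ 2)
    (μ : Measure ℝ)
    (hμ0 : μ {0} = 0)
    (hμint : ∫⁻ u : ℝ, ENNReal.ofReal (min 1 (u ^ 2)) ∂μ < ⊤)
    (σ : ℝ → ℝ)
    (hσpos : ∀ u : ℝ, 0 < |u| → |u| ≤ u₀ → 0 < σ u)
    (hσdiff : ∀ u : ℝ, 0 < |u| → |u| ≤ u₀ → DifferentiableAt ℝ σ u)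
    (hσbd : ∀ u : ℝ, 0 < |u| → |u| ≤ u₀ → |deriv σ u| ≤ C₀ * |u|⁻¹ * σ u)
    (χ : ℝ → ℝ)
    (hχ : ∀ u : ℝ, 0 < |u| → |u| ≤ u₀ →
      χ u = -(deriv (fun v => σ v * ρ v) u) / σ u)
    (hχ0 : ∀ u : ℝ, u₀ < |u| → χ u = 0) :
    ∫⁻ u : ℝ, ENNReal.ofReal (χ u ^ 2) ∂μ < ⊤ := by
  obtain ⟨M, hM⟩ := hρbd
  obtain ⟨B, hB⟩ := (isCompact_Icc (a := -u₀) (b := u₀)).exists_bound_of_continuousOn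
    hρ.continuous.continuousOn
  have hρd : Differentiable ℝ ρ := hρ.differentiable (by norm_num)
  have hχ_abs : ∀ u, 0 < |u| → |u| ≤ u₀ →
      |χ u| = |deriv (fun v => σ v * ρ v) u / σ u| := fun u hu hle => by
    rw [hχ u hu hle, neg_div, abs_neg]
  set t := min u₁ 1
  have ht : 0 < t := lt_min h1 one_pos
  have hsmall : ∀ u, 0 < |u| → |u| < t → |χ u| ≤ (C₀ + 2) * |u| := fun u hu hut => by
    have hu₁ : |u| < u₁ := hut.trans_le (min_le_left _ _)
    have hle : |u| ≤ u₀ := (hu₁.trans h2).le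
    rw [hχ_abs u hu hle]
    exact abs_deriv_mul_div_le_of_eq_sq hρ1 hu hu₁ (hσdiff u hu hle) (hρd u) (hσpos u hu hle)
      (hσbd u hu hle)
  have hmid : ∀ u, t ≤ |u| → |u| ≤ u₀ → |χ u| ≤ C₀ * t⁻¹ * B + M := fun u htu hle => by
    have hu : 0 < |u| := ht.trans_le htu
    calc |χ u| ≤ C₀ * |u|⁻¹ * |ρ u| + |deriv ρ u| := by
          rw [hχ_abs u hu hle]
          exact abs_deriv_mul_div_le (hσdiff u hu hle) (hρd u) (hσpos u hu hle) (hσbd u hu hle)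
      _ ≤ C₀ * t⁻¹ * B + M := by
        gcongr
        · exact hB u (abs_le.mp hle)
        · exact hM u
  obtain ⟨C, hC⟩ := exists_abs_le_mul_min_one_abs ht (min_le_right _ _) hsmall hmid hχ0
  exact lintegral_ofReal_sq_lt_top_of_abs_le_mul_min_one_abs hμ0 hμint hC

/-- Let `0 < u₁ < u₀`, let `ρ` be a cutoff function, and let `μ` be a Lévy measure
on `ℝ` (i.e. `μ({0}) = 0` and `∫ min(1, u²) μ(du) < ∞`) whose restriction to
`[−u₀, u₀]` has a density `σ` w.r.t. Lebesgue measure which is positive and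
continuously differentiable on `[−u₀, u₀] \ {0}` and satisfies
`|σ'(u)| ≤ C₀ |u|⁻¹ σ(u)` there. Then `χ(u) = −(σ(u)ρ(u))'/σ(u)` (for
`0 < |u| ≤ u₀`, extended by `0` for `|u| > u₀`) is square-integrable w.r.t. `μ`. -/
theorem stmt_9 (u₁ u₀ C₀ : ℝ) (h1 : 0 < u₁) (h2 : u₁ < u₀) (hC₀ : 0 < C₀)
    (ρ : ℝ → ℝ) (hρnn : ∀ u, 0 ≤ ρ u) (hρ : ContDiff ℝ 2 ρ)
    (hρbd : ∃ M : ℝ, ∀ u : ℝ, |deriv ρ u| ≤ M)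
    (hρ1 : ∀ u : ℝ, |u| ≤ u₁ → ρ u = u ^ 2)
    (hρ0 : ∀ u : ℝ, u₀ ≤ |u| → ρ u = 0)
    (μ : Measure ℝ)
    (hμ0 : μ {0} = 0)
    (hμint : ∫⁻ u : ℝ, ENNReal.ofReal (min 1 (u ^ 2)) ∂μ < ⊤)
    (σ : ℝ → ℝ)
    (hdens : μ.restrict (Set.Icc (-u₀) u₀) =
      (volume.restrict (Set.Icc (-u₀) u₀)).withDensity
        (fun u => ENNReal.ofReal (σ u)))
    (hσpos : ∀ u : ℝ, 0 < |u| → |u| ≤ u₀ → 0 < σ u)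
    (hσdiff : ∀ u : ℝ, 0 < |u| → |u| ≤ u₀ → DifferentiableAt ℝ σ u)
    (hσcont : ContinuousOn (deriv σ) {u : ℝ | 0 < |u| ∧ |u| ≤ u₀})
    (hσbd : ∀ u : ℝ, 0 < |u| → |u| ≤ u₀ → |deriv σ u| ≤ C₀ * |u|⁻¹ * σ u)
    (χ : ℝ → ℝ)
    (hχ : ∀ u : ℝ, 0 < |u| → |u| ≤ u₀ →
      χ u = -(deriv (fun v => σ v * ρ v) u) / σ u)
    (hχ0 : ∀ u : ℝ, u₀ < |u| → χ u = 0) :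
    ∫⁻ u : ℝ, ENNReal.ofReal (χ u ^ 2) ∂μ < ⊤ :=
  stmt_9_general u₁ u₀ C₀ h1 h2 hC₀ ρ hρ hρbd hρ1 μ hμ0 hμint σ hσpos hσdiff hσbd χ hχ hχ0
end

section
/- Fix 0 < u₁ < u₀, let ρ be a cutoff function, and let σ be a function on [−u₀, u₀] \ {0} that is positive and twice continuously differentiable there and satisfies |σ'(u)| ≤ C₀ |u|⁻¹ σ(u) and |σ''(u)| ≤ C₀ u⁻² σ(u) for all 0 < |u| ≤ u₀, where C₀ > 0 is a constant. Define χ(u) = −(σ(u)ρ(u))'/σ(u) for 0 < |u| ≤ u₀. Then χ is continuously differentiable on {u : 0 < |u| ≤ u₁} and there exists a constant C, depending only on C₀, such that |χ'(u)| ≤ C for all 0 < |u| ≤ u₁. -/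
/-!
Writing `χ = -ρ' - (log σ)' ρ`, one gets `χ' = -ρ'' - (σ''/σ - (σ'/σ)²) ρ - (σ'/σ) ρ'`.
On `|u| ≤ u₁` the cutoff is `u²`, so with `t = u σ'(u)/σ(u)` and `s = u² σ''(u)/σ(u)` this is
`χ'(u) = t² - 2t - s - 2`, and condition H(iii) says exactly that `|t|, |s| ≤ C₀`.
-/

open Set Filter Topology

section Deriv

variable {𝕜 : Type*} [NontriviallyNormedField 𝕜]

theorem Set.EqOn.deriv_of_uniqueDiffOn {F : Type*} [NormedAddCommGroup F] [NormedSpace 𝕜 F]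
    {f g : 𝕜 → F} {s : Set 𝕜} (hfg : EqOn f g s) (hs : UniqueDiffOn 𝕜 s)
    (hf : ∀ x ∈ s, DifferentiableAt 𝕜 f x) (hg : ∀ x ∈ s, DifferentiableAt 𝕜 g x) :
    EqOn (_root_.deriv f) (_root_.deriv g) s := fun x hx => by
  rw [← (hf x hx).derivWithin (hs x hx), ← (hg x hx).derivWithin (hs x hx)]
  exact derivWithin_congr hfg (hfg hx)

theorem hasDerivAt_logDeriv {f : 𝕜 → 𝕜} {x : 𝕜} (hf : DifferentiableAt 𝕜 f x)
    (hf' : DifferentiableAt 𝕜 (deriv f) x) (hfx : f x ≠ 0) :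
    HasDerivAt (logDeriv f) (deriv (deriv f) x / f x - logDeriv f x ^ 2) x := by
  refine (hf'.hasDerivAt.div hf.hasDerivAt hfx).congr_deriv ?_
  rw [logDeriv_apply]
  field_simp

theorem neg_deriv_mul_div_eq {σ ρ : 𝕜 → 𝕜} {x : 𝕜} (hσ : DifferentiableAt 𝕜 σ x)
    (hρ : DifferentiableAt 𝕜 ρ x) (hσx : σ x ≠ 0) :
    -deriv (fun v => σ v * ρ v) x / σ x = -deriv ρ x - logDeriv σ x * ρ x := by
  rw [deriv_fun_mul hσ hρ, logDeriv_apply]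
  field_simp
  ring

theorem hasDerivAt_neg_deriv_sub_logDeriv_mul {σ ρ : 𝕜 → 𝕜} {x : 𝕜}
    (hσ : DifferentiableAt 𝕜 σ x) (hσ' : DifferentiableAt 𝕜 (deriv σ) x) (hσx : σ x ≠ 0)
    (hρ : DifferentiableAt 𝕜 ρ x) (hρ' : DifferentiableAt 𝕜 (deriv ρ) x) :
    HasDerivAt (fun v => -deriv ρ v - logDeriv σ v * ρ v)
      (-deriv (deriv ρ) x - (deriv (deriv σ) x / σ x - logDeriv σ x ^ 2) * ρ x -
        logDeriv σ x * deriv ρ x) x :=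
  (hρ'.hasDerivAt.fun_neg.fun_sub
    ((hasDerivAt_logDeriv hσ hσ' hσx).fun_mul hρ.hasDerivAt)).congr_deriv (by ring)

end Deriv

theorem eqOn_deriv_of_eqOn_sq {ρ : ℝ → ℝ} {r : ℝ} (hr : 0 < r) (hρ : ContDiff ℝ 2 ρ)
    (hρr : EqOn ρ (· ^ 2) (Icc (-r) r)) :
    EqOn (deriv ρ) (2 * ·) (Icc (-r) r) ∧ EqOn (deriv (deriv ρ)) (fun _ => 2) (Icc (-r) r) := by
  have hs : UniqueDiffOn ℝ (Icc (-r) r) := uniqueDiffOn_Icc (by linarith)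
  have h1 : EqOn (deriv ρ) (2 * ·) (Icc (-r) r) := by
    have hsq : deriv (fun x : ℝ => x ^ 2) = (2 * ·) := funext fun x => by simp
    simpa only [hsq] using hρr.deriv_of_uniqueDiffOn hs
      (fun x _ => hρ.differentiable two_ne_zero x) (fun x _ => differentiableAt_pow 2)
  have hlin : deriv (fun x : ℝ => 2 * x) = fun _ => 2 := funext fun x => by simp
  refine ⟨h1, ?_⟩
  simpa only [hlin] using h1.deriv_of_uniqueDiffOn hs
    (fun x _ => hρ.differentiable_deriv_two x) (fun x _ => differentiableAt_id.const_mul 2)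

theorem abs_div_mul_le_of_abs_le_mul_inv {a b m C : ℝ} (ha : 0 < a) (hm : m ≠ 0)
    (h : |b| ≤ C * |m|⁻¹ * a) : |b / a * m| ≤ C := by
  rw [abs_mul, abs_div, abs_of_pos ha, div_mul_eq_mul_div, div_le_iff₀ ha]
  calc |b| * |m| ≤ C * |m|⁻¹ * a * |m| := by gcongr
    _ = C * a := by field_simp

theorem abs_sq_sub_two_mul_sub_sub_two_le {t s C : ℝ} (ht : |t| ≤ C) (hs : |s| ≤ C) :
    |t ^ 2 - 2 * t - s - 2| ≤ C ^ 2 + 3 * C + 2 := by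
  have ht2 : t ^ 2 ≤ C ^ 2 := sq_le_sq' (abs_le.mp ht).1 (abs_le.mp ht).2
  rw [abs_le] at ht hs ⊢
  constructor <;> nlinarith

/-- The derivative from `hasDerivAt_neg_deriv_sub_logDeriv_mul` at a point where
`ρ = u²`, `ρ' = 2u`, `ρ'' = 2`. -/
noncomputable def chiDeriv (σ : ℝ → ℝ) (u : ℝ) : ℝ :=
  -2 - (deriv (deriv σ) u / σ u - logDeriv σ u ^ 2) * u ^ 2 - logDeriv σ u * (2 * u)

theorem continuousOn_chiDeriv {σ : ℝ → ℝ} {s : Set ℝ} (hσ : ∀ u ∈ s, DifferentiableAt ℝ σ u)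
    (hσ' : ∀ u ∈ s, DifferentiableAt ℝ (deriv σ) u) (hσ'' : ContinuousOn (deriv (deriv σ)) s)
    (hσs : ∀ u ∈ s, σ u ≠ 0) : ContinuousOn (chiDeriv σ) s := by
  have hσc : ContinuousOn σ s := fun u hu => (hσ u hu).continuousAt.continuousWithinAt
  have hσc' : ContinuousOn (deriv σ) s := fun u hu => (hσ' u hu).continuousAt.continuousWithinAt
  have hL : ContinuousOn (logDeriv σ) s := hσc'.div hσc hσs
  unfold chiDeriv
  fun_prop (disch := assumption)

theorem abs_chiDeriv_le {σ : ℝ → ℝ} {u C : ℝ} (hu : u ≠ 0) (hσu : 0 < σ u)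
    (hσ' : |deriv σ u| ≤ C * |u|⁻¹ * σ u) (hσ'' : |deriv (deriv σ) u| ≤ C * (u ^ 2)⁻¹ * σ u) :
    |chiDeriv σ u| ≤ C ^ 2 + 3 * C + 2 := by
  have ht := abs_div_mul_le_of_abs_le_mul_inv hσu hu hσ'
  have hs := abs_div_mul_le_of_abs_le_mul_inv (m := u ^ 2) hσu (pow_ne_zero 2 hu)
    (by simpa only [abs_pow, sq_abs] using hσ'')
  convert abs_sq_sub_two_mul_sub_sub_two_le ht hs using 2
  simp only [chiDeriv, logDeriv_apply]
  ring

theorem stmt_11_general (u₁ u₀ C₀ : ℝ) (h1 : 0 < u₁) (h2 : u₁ < u₀)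
    (ρ : ℝ → ℝ) (hρ : ContDiff ℝ 2 ρ)
    (hρ1 : ∀ u : ℝ, |u| ≤ u₁ → ρ u = u ^ 2)
    (σ : ℝ → ℝ)
    (hσpos : ∀ u : ℝ, 0 < |u| → |u| ≤ u₀ → 0 < σ u)
    (hσdiff : ∀ u : ℝ, 0 < |u| → |u| ≤ u₀ → DifferentiableAt ℝ σ u)
    (hσdiff2 : ∀ u : ℝ, 0 < |u| → |u| ≤ u₀ → DifferentiableAt ℝ (deriv σ) u)
    (hσcont2 : ContinuousOn (deriv (deriv σ)) {u : ℝ | 0 < |u| ∧ |u| ≤ u₀})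
    (hσbd : ∀ u : ℝ, 0 < |u| → |u| ≤ u₀ → |deriv σ u| ≤ C₀ * |u|⁻¹ * σ u)
    (hσbd2 : ∀ u : ℝ, 0 < |u| → |u| ≤ u₀ →
      |deriv (deriv σ) u| ≤ C₀ * (u ^ 2)⁻¹ * σ u)
    (χ : ℝ → ℝ)
    (hχ : ∀ u : ℝ, 0 < |u| → |u| ≤ u₀ →
      χ u = -(deriv (fun v => σ v * ρ v) u) / σ u) :
    (∀ u : ℝ, 0 < |u| → |u| ≤ u₁ → DifferentiableAt ℝ χ u) ∧
    ContinuousOn (deriv χ) {u : ℝ | 0 < |u| ∧ |u| ≤ u₁} ∧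
    ∃ C : ℝ, ∀ u : ℝ, 0 < |u| → |u| ≤ u₁ → |deriv χ u| ≤ C := by
  set S := {u : ℝ | 0 < |u| ∧ |u| ≤ u₁}
  have hS : ∀ u ∈ S, 0 < |u| ∧ |u| ≤ u₀ := fun u hu => ⟨hu.1, hu.2.trans h2.le⟩
  obtain ⟨hρ', hρ''⟩ := eqOn_deriv_of_eqOn_sq h1 hρ fun u hu => hρ1 u (abs_le.mpr hu)
  have hχ' : ∀ u ∈ S, HasDerivAt χ (chiDeriv σ u) u := fun u hu => by
    obtain ⟨hu0, hu0'⟩ := hS u hu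
    have hχ_near : χ =ᶠ[𝓝 u] fun v => -deriv ρ v - logDeriv σ v * ρ v := by
      filter_upwards [continuous_abs.continuousAt.preimage_mem_nhds
        (Ioo_mem_nhds hu.1 (hu.2.trans_lt h2))] with v ⟨hv0, hv⟩
      rw [hχ v hv0 hv.le, neg_deriv_mul_div_eq (hσdiff v hv0 hv.le)
        (hρ.differentiable two_ne_zero v) (hσpos v hv0 hv.le).ne']
    have hu₁ : u ∈ Icc (-u₁) u₁ := abs_le.mp hu.2
    have hderiv := hasDerivAt_neg_deriv_sub_logDeriv_mul (hσdiff u hu0 hu0')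
      (hσdiff2 u hu0 hu0') (hσpos u hu0 hu0').ne' (hρ.differentiable two_ne_zero u)
      (hρ.differentiable_deriv_two u)
    refine (hderiv.congr_of_eventuallyEq hχ_near).congr_deriv ?_
    rw [hρ1 u hu.2, hρ' hu₁, hρ'' hu₁, chiDeriv]
  refine ⟨fun u h h' => (hχ' u ⟨h, h'⟩).differentiableAt, ?_, C₀ ^ 2 + 3 * C₀ + 2, ?_⟩
  · exact (continuousOn_chiDeriv (fun u hu => hσdiff u (hS u hu).1 (hS u hu).2)
      (fun u hu => hσdiff2 u (hS u hu).1 (hS u hu).2) (hσcont2.mono fun u hu => hS u hu)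
      fun u hu => (hσpos u (hS u hu).1 (hS u hu).2).ne').congr fun u hu => (hχ' u hu).deriv
  · intro u hu0 hu1
    obtain ⟨hu0', hu1'⟩ := hS u ⟨hu0, hu1⟩
    rw [(hχ' u ⟨hu0, hu1⟩).deriv]
    exact abs_chiDeriv_le (abs_pos.mp hu0) (hσpos u hu0' hu1') (hσbd u hu0' hu1')
      (hσbd2 u hu0' hu1')

/-- Let `0 < u₁ < u₀`, let `ρ` be a cutoff function, and let `σ` be positive and
twice continuously differentiable on `[−u₀, u₀] \ {0}` with
`|σ'(u)| ≤ C₀ |u|⁻¹ σ(u)` and `|σ''(u)| ≤ C₀ u⁻² σ(u)` there. Then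
`χ(u) = −(σ(u)ρ(u))'/σ(u)` is continuously differentiable on `{u : 0 < |u| ≤ u₁}`
and there is a constant `C` (depending only on `C₀`) with `|χ'(u)| ≤ C` for all
`0 < |u| ≤ u₁`. -/
theorem stmt_11 (u₁ u₀ C₀ : ℝ) (h1 : 0 < u₁) (h2 : u₁ < u₀) (hC₀ : 0 < C₀)
    (ρ : ℝ → ℝ) (hρnn : ∀ u, 0 ≤ ρ u) (hρ : ContDiff ℝ 2 ρ)
    (hρbd : ∃ M : ℝ, ∀ u : ℝ, |deriv ρ u| ≤ M)
    (hρ1 : ∀ u : ℝ, |u| ≤ u₁ → ρ u = u ^ 2)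
    (hρ0 : ∀ u : ℝ, u₀ ≤ |u| → ρ u = 0)
    (σ : ℝ → ℝ)
    (hσpos : ∀ u : ℝ, 0 < |u| → |u| ≤ u₀ → 0 < σ u)
    (hσdiff : ∀ u : ℝ, 0 < |u| → |u| ≤ u₀ → DifferentiableAt ℝ σ u)
    (hσdiff2 : ∀ u : ℝ, 0 < |u| → |u| ≤ u₀ → DifferentiableAt ℝ (deriv σ) u)
    (hσcont2 : ContinuousOn (deriv (deriv σ)) {u : ℝ | 0 < |u| ∧ |u| ≤ u₀})
    (hσbd : ∀ u : ℝ, 0 < |u| → |u| ≤ u₀ → |deriv σ u| ≤ C₀ * |u|⁻¹ * σ u)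
    (hσbd2 : ∀ u : ℝ, 0 < |u| → |u| ≤ u₀ →
      |deriv (deriv σ) u| ≤ C₀ * (u ^ 2)⁻¹ * σ u)
    (χ : ℝ → ℝ)
    (hχ : ∀ u : ℝ, 0 < |u| → |u| ≤ u₀ →
      χ u = -(deriv (fun v => σ v * ρ v) u) / σ u) :
    (∀ u : ℝ, 0 < |u| → |u| ≤ u₁ → DifferentiableAt ℝ χ u) ∧
    ContinuousOn (deriv χ) {u : ℝ | 0 < |u| ∧ |u| ≤ u₁} ∧
    ∃ C : ℝ, ∀ u : ℝ, 0 < |u| → |u| ≤ u₁ → |deriv χ u| ≤ C :=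
  stmt_11_general u₁ u₀ C₀ h1 h2 ρ hρ hρ1 σ hσpos hσdiff hσdiff2 hσcont2 hσbd hσbd2 χ hχ
end
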